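/- If a graphic sequence d = (d_1, ..., d_n), listed in nonincreasing order, satisfies the k-th Erdős–Gallai inequality with equality (i.e., Σ_{i≤k} d_i = k(k−1) + Σ_{i>k} min{k, d_i}), then k ≤ m(d), where m(d) = max{ i : d_i ≥ i−1 }. -/

import Mathlib

open SimpleGraph Finset

/-- `s` is an independent set in `G`. -/
def IsIndepSet {α : Type*} (G : SimpleGraph α) (s : Set α) : Prop :=
  s.Pairwise fun a b => ¬ G.Adj a b

/-- `(G, A, B)` is a splitted graph: `A` an independent set and `B` a clique
partitioning the vertex set of `G`. -/
def IsSplitted {α : Type*} (G : SimpleGraph α) (A B : Set α) : Prop :=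
  _root_.IsIndepSet G A ∧ G.IsClique B ∧ A ∪ B = Set.univ ∧ Disjoint A B

/-- `G` is a split graph. -/
def IsSplitGraph {α : Type*} (G : SimpleGraph α) : Prop :=
  ∃ A B : Set α, IsSplitted G A B

/-- Tyshkevich composition `(G, A, B) ∘ H`: the disjoint union of `G` and `H`
together with all edges between the clique `B` and the vertices of `H`. -/
def comp {α β : Type*} (G : SimpleGraph α) (B : Set α) (H : SimpleGraph β) :
    SimpleGraph (α ⊕ β) where
  Adj x y :=
    match x, y with
    | Sum.inl a, Sum.inl a' => G.Adj a a'
    | Sum.inr b, Sum.inr b' => H.Adj b b'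
    | Sum.inl a, Sum.inr _ => a ∈ B
    | Sum.inr _, Sum.inl a => a ∈ B
  symm := by
    refine ⟨?_⟩
    rintro (a | b) (a' | b') h
    · exact G.adj_symm h
    · exact h
    · exact h
    · exact H.adj_symm h
  loopless := by
    refine ⟨?_⟩
    rintro (a | b) h
    · exact G.irrefl h
    · exact H.irrefl h

/-- The degree of a vertex, as the cardinality of its neighborhood. -/
noncomputable def deg {α : Type*} (G : SimpleGraph α) (v : α) : ℕ :=
  (G.neighborSet v).ncard

/-- The disjoint union of two edges. -/
def twoK2 : SimpleGraph (Fin 4) :=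
  SimpleGraph.fromRel fun a b => (a.val = 0 ∧ b.val = 1) ∨ (a.val = 2 ∧ b.val = 3)

/-- The 4-cycle. -/
def cycle4 : SimpleGraph (Fin 4) :=
  SimpleGraph.fromRel fun a b =>
    (a.val = 0 ∧ b.val = 1) ∨ (a.val = 1 ∧ b.val = 2) ∨
    (a.val = 2 ∧ b.val = 3) ∨ (a.val = 3 ∧ b.val = 0)

/-- The path on four vertices. -/
def path4 : SimpleGraph (Fin 4) :=
  SimpleGraph.fromRel fun a b =>
    (a.val = 0 ∧ b.val = 1) ∨ (a.val = 1 ∧ b.val = 2) ∨ (a.val = 2 ∧ b.val = 3)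

/-- The 5-cycle. -/
def cycle5 : SimpleGraph (Fin 5) :=
  SimpleGraph.fromRel fun a b =>
    (a.val = 0 ∧ b.val = 1) ∨ (a.val = 1 ∧ b.val = 2) ∨
    (a.val = 2 ∧ b.val = 3) ∨ (a.val = 3 ∧ b.val = 4) ∨ (a.val = 4 ∧ b.val = 0)

/-!
Equality in the `k`-th Erdős–Gallai inequality for a graph realizing `d` forces the first `k`
vertices to form a clique, so each of them has degree at least `k - 1`. If `k > m(d)`, the
vertex with 1-based index `m(d) + 1` is among them, hence `d_{m(d)+1} ≥ k - 1 ≥ m(d)`,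
contradicting the maximality of `m(d)`.
-/

lemma deg_eq_degree {V : Type*} [Fintype V] (G : SimpleGraph V) [DecidableRel G.Adj] (v : V) :
    deg G v = G.degree v := by
  rw [deg, ← card_neighborFinset_eq_degree, ← Set.ncard_coe_finset, coe_neighborFinset]

namespace SimpleGraph

variable {V : Type*} (G : SimpleGraph V) [DecidableRel G.Adj]

lemma degree_eq_card_adj_add_card_adj_compl [Fintype V] [DecidableEq V] (S : Finset V) (v : V) :
    G.degree v = #{w ∈ S | G.Adj v w} + #{w ∈ Sᶜ | G.Adj v w} := by
  rw [← card_neighborFinset_eq_degree, neighborFinset_eq_filter, ← union_compl S, filter_union,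
    card_union_of_disjoint (disjoint_filter_filter disjoint_compl_right)]

lemma filter_adj_subset_erase [DecidableEq V] (S : Finset V) (v : V) :
    {w ∈ S | G.Adj v w} ⊆ S.erase v := fun _ hw ↦
  mem_erase.2 ⟨fun h ↦ G.irrefl (h ▸ (mem_filter.1 hw).2), (mem_filter.1 hw).1⟩

lemma card_adj_le_card_erase [DecidableEq V] {S : Finset V} {v : V} (hv : v ∈ S) :
    #{w ∈ S | G.Adj v w} ≤ #S - 1 :=
  card_erase_of_mem hv ▸ card_le_card (G.filter_adj_subset_erase S v)

lemma card_adj_le_min_card_degree [Fintype V] (S : Finset V) (w : V) :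
    #{v ∈ S | G.Adj w v} ≤ min #S (G.degree w) := by
  refine le_min (card_filter_le _ _) ?_
  rw [← card_neighborFinset_eq_degree, neighborFinset_eq_filter]
  exact card_le_card (monotone_filter_left _ (subset_univ S))

lemma sum_card_adj_compl_eq_sum_card_adj [Fintype V] [DecidableEq V] (S : Finset V) :
    ∑ v ∈ S, #{w ∈ Sᶜ | G.Adj v w} = ∑ w ∈ Sᶜ, #{v ∈ S | G.Adj w v} := by
  simp only [card_filter]
  rw [sum_comm]
  simp only [G.adj_comm]

theorem isClique_of_sum_degree_eq [Fintype V] [DecidableEq V] {S : Finset V}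
    (h : ∑ v ∈ S, G.degree v = #S * (#S - 1) + ∑ v ∈ Sᶜ, min #S (G.degree v)) :
    G.IsClique (S : Set V) := by
  have hout : ∑ v ∈ S, #{w ∈ Sᶜ | G.Adj v w} ≤ ∑ v ∈ Sᶜ, min #S (G.degree v) := by
    rw [sum_card_adj_compl_eq_sum_card_adj]
    exact sum_le_sum fun w _ ↦ G.card_adj_le_min_card_degree S w
  -- `h` splits into an inner and an outer part, each bounded termwise, so all inner bounds are tight
  have hin : ∑ v ∈ S, #{w ∈ S | G.Adj v w} = ∑ _v ∈ S, (#S - 1) := by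
    refine le_antisymm (sum_le_sum fun v hv ↦ G.card_adj_le_card_erase hv) ?_
    rw [sum_congr rfl fun v _ ↦ G.degree_eq_card_adj_add_card_adj_compl S v, sum_add_distrib] at h
    rw [sum_const, smul_eq_mul]
    omega
  intro v hv w hw hvw
  have hfull : {u ∈ S | G.Adj v u} = S.erase v :=
    eq_of_subset_of_card_le (G.filter_adj_subset_erase S v) <| by
      rw [card_erase_of_mem hv, (sum_eq_sum_iff_of_le
        fun u hu ↦ G.card_adj_le_card_erase hu).1 hin v hv]
  exact (mem_filter.1 (hfull ▸ mem_erase.2 ⟨Ne.symm hvw, hw⟩)).2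

variable {G} in
lemma IsClique.card_sub_one_le_degree [Fintype V] [DecidableEq V] {S : Finset V}
    (hS : G.IsClique (S : Set V)) {v : V} (hv : v ∈ S) : #S - 1 ≤ G.degree v := by
  rw [← card_erase_of_mem hv, ← card_neighborFinset_eq_degree]
  exact card_le_card fun w hw ↦ (G.mem_neighborFinset v w).2 <|
    hS hv (mem_erase.1 hw).2 (Ne.symm (mem_erase.1 hw).1)

end SimpleGraph

/-- `d` is indexed by `Fin n`, so the 1-based term `d_i` of the paper is `d ⟨i - 1⟩`. -/
theorem stmt2_general (n k : ℕ) (d : Fin n → ℕ)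
    (hgraphic : ∃ G : SimpleGraph (Fin n), ∀ i, deg G i = d i)
    (hk : k ≤ n)
    (heq : ∑ i ∈ Finset.univ.filter (fun i : Fin n => (i : ℕ) < k), d i =
        k * (k - 1) +
          ∑ i ∈ Finset.univ.filter (fun i : Fin n => ¬ (i : ℕ) < k), min k (d i)) :
    k ≤ (Finset.univ.filter (fun i : Fin n => (i : ℕ) ≤ d i)).sup
        (fun i : Fin n => (i : ℕ) + 1) := by
  classical
  obtain ⟨G, hG⟩ := hgraphic
  have hdeg (i : Fin n) : G.degree i = d i := (deg_eq_degree G i).symm.trans (hG i)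
  set S : Finset (Fin n) := {i | (i : ℕ) < k}
  have hS : #S = k := by rw [Fin.card_filter_val_lt]; omega
  have hclique : G.IsClique (S : Set (Fin n)) := by
    refine G.isClique_of_sum_degree_eq ?_
    simpa only [hdeg, hS, ← filter_not, ← compl_filter] using heq
  set m := (univ.filter fun i : Fin n => (i : ℕ) ≤ d i).sup fun i : Fin n => (i : ℕ) + 1
  by_contra! hmk
  have hm_le : m ≤ d ⟨m, by omega⟩ := by
    rw [← hdeg]
    have := hclique.card_sub_one_le_degree (v := ⟨m, by omega⟩) (mem_filter.2 ⟨mem_univ _, hmk⟩)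
    omega
  have hsup : m + 1 ≤ m :=
    le_sup (f := fun i : Fin n => (i : ℕ) + 1) (mem_filter.2 ⟨mem_univ ⟨m, by omega⟩, hm_le⟩)
  omega

/-- if a graphic sequence `d` (nonincreasing, indexed by `Fin n`,
so that the 1-based term `d_i` is `d ⟨i-1⟩`) satisfies the `k`-th Erdős–Gallai
inequality with equality, then `k ≤ m(d) = max{i : d_i ≥ i − 1}`. -/
theorem stmt2 (n k : ℕ) (d : Fin n → ℕ) (hanti : Antitone d)
    (hgraphic : ∃ G : SimpleGraph (Fin n), ∀ i, deg G i = d i)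
    (hk : k ≤ n)
    (heq : ∑ i ∈ Finset.univ.filter (fun i : Fin n => (i : ℕ) < k), d i =
        k * (k - 1) +
          ∑ i ∈ Finset.univ.filter (fun i : Fin n => ¬ (i : ℕ) < k), min k (d i)) :
    k ≤ (Finset.univ.filter (fun i : Fin n => (i : ℕ) ≤ d i)).sup
        (fun i : Fin n => (i : ℕ) + 1) :=
  stmt2_general n k d hgraphic hk heq
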